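/- arXiv:1510.06450 — 4 statements merged into one kernel-verified Lean document; each statement's English description precedes it below -/
import Mathlib

section
/- Let p be an odd prime and u ∈ 1 + pℤ_p with u ≠ 1. For integers i, j and k ≥ n + 1 ≥ 2, the quotient of the p^k-th cyclotomic polynomial evaluated at u^(j−i), divided by p, i.e. ((u^(j−i))^(p^k) − 1)/(p·((u^(j−i))^(p^{k−1}) − 1)), lies in 1 + p^n ℤ_p, provided i ≠ j. -/
/-!
Put `x = u ^ (j - i)` and `y = x ^ p ^ (k - 1)`. Then `x ∈ 1 + pℤ_p`, so `y ≡ 1 mod p ^ k`, and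
`y ≠ 1` because `1 + pℤ_p` has no torsion for odd `p` (lifting the exponent). The quotient equals
`(∑ r < p, y ^ r) / p`, and writing `y = 1 + t`, `∑ r < p, (1 + t) ^ r ≡ p + (p choose 2) t`
modulo `t ^ 2`; since `p` is odd it divides `p choose 2`, so the sum is `≡ p mod p ^ (k + 1)`.
-/

open Finset

theorem sq_dvd_geom_sum_one_add_sub {R : Type*} [CommRing R] (t : R) (N : ℕ) :
    t ^ 2 ∣ ∑ r ∈ range N, (1 + t) ^ r - N - N.choose 2 * t := by
  have hsum : ∑ r ∈ range N, (1 + t) ^ r - N - N.choose 2 * t =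
      ∑ r ∈ range N, ((1 + t) ^ r - 1 ^ (r - 1) * t * r - 1 ^ r) := by
    rw [Nat.choose_two_right, ← sum_range_id]
    simp only [one_pow, mul_one, sum_sub_distrib, Nat.cast_sum, sum_mul, sum_const, card_range,
      nsmul_eq_mul, one_mul, mul_comm t]
    exact sub_right_comm _ _ _
  rw [hsum]
  exact dvd_sum fun r _ => sq_dvd_add_pow_sub_sub t 1 r

theorem pow_succ_dvd_geom_sum_prime_sub {R : Type*} [CommRing R] {p : ℕ} (hp : p.Prime)
    (hodd : Odd p) {y : R} {k : ℕ} (hk : k ≠ 0) (hy : (p : R) ^ k ∣ y - 1) :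
    (p : R) ^ (k + 1) ∣ ∑ r ∈ range p, y ^ r - p := by
  obtain ⟨t, rfl⟩ : ∃ t, y = 1 + t := ⟨y - 1, by ring⟩
  rw [add_sub_cancel_left] at hy
  have h2p : 2 < p := by
    obtain ⟨m, rfl⟩ := hodd
    have := hp.two_le
    omega
  have hchoose : (p : R) ∣ p.choose 2 :=
    Nat.cast_dvd_cast (hp.dvd_choose_self two_ne_zero h2p)
  have hlin : (p : R) ^ (k + 1) ∣ p.choose 2 * t := by
    rw [pow_succ']; exact mul_dvd_mul hchoose hy
  have hsq : (p : R) ^ (k + 1) ∣ t ^ 2 := by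
    refine (pow_dvd_pow _ (by omega : k + 1 ≤ k * 2)).trans ?_
    rw [pow_mul]
    exact pow_dvd_pow_of_dvd hy 2
  simpa using dvd_add hlin (hsq.trans (sq_dvd_geom_sum_one_add_sub t p))

namespace PadicInt

variable {p : ℕ} [Fact p.Prime]

theorem toZMod_eq_one_iff {z : ℤ_[p]} : toZMod z = 1 ↔ (p : ℤ_[p]) ∣ z - 1 := by
  rw [← sub_eq_zero, ← map_one toZMod, ← map_sub, ← RingHom.mem_ker, ker_toZMod,
    maximalIdeal_eq_span_p, Ideal.mem_span_singleton]

theorem dvd_val_zpow_sub_one {w : ℤ_[p]ˣ} (hw : (p : ℤ_[p]) ∣ w - 1) (m : ℤ) :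
    (p : ℤ_[p]) ∣ ((w ^ m : ℤ_[p]ˣ) : ℤ_[p]) - 1 := by
  have hker : w ∈ (Units.map (toZMod (p := p)).toMonoidHom).ker :=
    Units.ext (toZMod_eq_one_iff.mpr hw)
  exact toZMod_eq_one_iff.mp (congrArg Units.val (Subgroup.zpow_mem _ hker m))

theorem isUnit_one_add_p_mul (a : ℤ_[p]) : IsUnit (1 + (p : ℤ_[p]) * a) := by
  simpa using IsLocalRing.isUnit_one_sub_self_of_mem_nonunits (-(p * a))
    (mem_nonunits.mpr ((norm_lt_one_iff_dvd _).mpr (dvd_neg.mpr (dvd_mul_right _ _))))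

theorem eq_one_of_pow_eq_one (hp : Odd p) {w : ℤ_[p]} (hw : (p : ℤ_[p]) ∣ w - 1) {N : ℕ}
    (hN : N ≠ 0) (h : w ^ N = 1) : w = 1 := by
  have hpw : ¬(p : ℤ_[p]) ∣ w := fun hdvd => prime_p.not_dvd_one (by simpa using dvd_sub hdvd hw)
  obtain ⟨e, M, hM, rfl⟩ := Nat.exists_eq_pow_mul_and_not_dvd hN p (Fact.out : p.Prime).ne_one
  have hM' : ¬(p : ℤ_[p]) ∣ M := by rwa [← norm_lt_one_iff_dvd, norm_natCast_lt_one_iff]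
  have hlte := emultiplicity_pow_prime_pow_sub_pow_prime_pow (y := 1) prime_p hp hw hpw e
  have hcoprime := emultiplicity_pow_sub_pow_of_prime (x := w ^ p ^ e) (y := 1) prime_p
    (by simpa using hw.trans (sub_dvd_pow_sub_pow w 1 (p ^ e)))
    (fun hd => hpw (prime_p.dvd_of_dvd_pow hd)) hM'
  rw [one_pow] at hlte
  -- both sides of `hcoprime` are `v_p(w ^ (p ^ e * M) - 1)`; the left one is `⊤` since `w ^ N = 1`
  rw [← pow_mul, h, one_pow, sub_self, emultiplicity_zero, hlte] at hcoprime
  have htop : emultiplicity (p : ℤ_[p]) (w - 1) = ⊤ := by simpa using hcoprime.symm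
  by_contra hw1
  exact emultiplicity_eq_top.mp htop
    (FiniteMultiplicity.of_prime_left prime_p (sub_ne_zero.mpr hw1))

theorem coe_val_zpow {w : ℤ_[p]ˣ} (m : ℤ) :
    (((w ^ m : ℤ_[p]ˣ) : ℤ_[p]) : ℚ_[p]) = ((w : ℤ_[p]) : ℚ_[p]) ^ m := by
  change ((Units.map (Coe.ringHom : ℤ_[p] →+* ℚ_[p]).toMonoidHom (w ^ m) : ℚ_[p]ˣ) : ℚ_[p]) = _
  rw [map_zpow, Units.val_zpow_eq_zpow_val]
  rfl

theorem exists_pow_prime_pow_sub_one_div_eq (hp : Odd p) {x : ℤ_[p]} (hx : (p : ℤ_[p]) ∣ x - 1)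
    (hx1 : x ≠ 1) {k : ℕ} (hk : k ≠ 0) :
    ∃ c : ℤ_[p], ((x : ℚ_[p]) ^ p ^ k - 1) / (p * ((x : ℚ_[p]) ^ p ^ (k - 1) - 1))
      = 1 + (p : ℚ_[p]) ^ k * c := by
  obtain ⟨y, hy⟩ : ∃ y, x ^ p ^ (k - 1) = y := ⟨_, rfl⟩
  have hpk : p ^ k = p ^ (k - 1) * p := by rw [← pow_succ, Nat.sub_add_cancel (by omega)]
  have hyk : (p : ℤ_[p]) ^ k ∣ y - 1 := by
    simpa [← hy, Nat.sub_add_cancel (by omega : 1 ≤ k)] using dvd_sub_pow_of_dvd_sub hx (k - 1)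
  have hy1 : (y : ℚ_[p]) - 1 ≠ 0 := by
    refine sub_ne_zero.mpr fun h => hx1 (eq_one_of_pow_eq_one hp hx (N := p ^ (k - 1))
      (pow_ne_zero _ (Fact.out : p.Prime).ne_zero) ?_)
    rw [hy]; exact PadicInt.ext (by simpa using h)
  obtain ⟨c, hc⟩ := pow_succ_dvd_geom_sum_prime_sub (Fact.out : p.Prime) hp hk hyk
  have hfactor : y ^ p - 1 = (y - 1) * (p * (1 + p ^ k * c)) := by
    rw [← geom_sum_mul]; linear_combination (y - 1) * hc
  refine ⟨c, ?_⟩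
  have hfactor' := congrArg ((↑) : ℤ_[p] → ℚ_[p]) hfactor
  push_cast at hfactor'
  have hyQ : (x : ℚ_[p]) ^ p ^ (k - 1) = y := by rw [← hy, coe_pow]
  have hp0 : (p : ℚ_[p]) ≠ 0 := Nat.cast_ne_zero.mpr (Fact.out : p.Prime).ne_zero
  rw [hpk, pow_mul, hyQ, hfactor']
  field_simp

end PadicInt

theorem stmt2_general (p : ℕ) [Fact p.Prime] (hp : Odd p) (u : ℚ_[p])
    (hu : ∃ a : ℤ_[p], u = 1 + (p : ℚ_[p]) * a) (hu1 : u ≠ 1)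
    (i j : ℤ) (hij : i ≠ j) (n k : ℕ) (hk : n + 1 ≤ k) :
    ∃ c : ℤ_[p],
      ((u ^ (j - i)) ^ (p ^ k) - 1) / ((p : ℚ_[p]) * ((u ^ (j - i)) ^ (p ^ (k - 1)) - 1))
        = 1 + (p : ℚ_[p]) ^ n * (c : ℚ_[p]) := by
  obtain ⟨a, rfl⟩ := hu
  obtain ⟨w, hw⟩ := PadicInt.isUnit_one_add_p_mul a
  have hwu : ((w : ℤ_[p]) : ℚ_[p]) = 1 + p * a := by rw [hw]; push_cast; rfl
  have hw1 : (p : ℤ_[p]) ∣ (w : ℤ_[p]) - 1 := ⟨a, by rw [hw]; ring⟩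
  have hne : ((w ^ (j - i) : ℤ_[p]ˣ) : ℤ_[p]) ≠ 1 := by
    intro h
    have hpow : (w : ℤ_[p]) ^ (j - i).natAbs = 1 := by
      rw [← Units.val_pow_eq_pow_val, pow_natAbs_eq_one.mpr (Units.ext h), Units.val_one]
    refine hu1 ?_
    rw [← hwu, PadicInt.eq_one_of_pow_eq_one hp hw1 (by omega) hpow, PadicInt.coe_one]
  obtain ⟨c, hc⟩ := PadicInt.exists_pow_prime_pow_sub_one_div_eq hp
    (PadicInt.dvd_val_zpow_sub_one hw1 _) hne (by omega : k ≠ 0)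
  refine ⟨p ^ (k - n) * c, ?_⟩
  rw [← hwu, ← PadicInt.coe_val_zpow, hc]
  push_cast
  rw [← mul_assoc, ← pow_add, Nat.add_sub_of_le (by omega : n ≤ k)]

/-- Let `p` be an odd prime and `u ∈ 1 + pℤ_p` with `u ≠ 1`.  For
integers `i ≠ j` and `k ≥ n + 1 ≥ 2`, the quotient
`((u^(j−i))^(p^k) − 1)/(p·((u^(j−i))^(p^(k−1)) − 1))` (which is `Φ_{p^k}(u^(j−i))/p`)
lies in `1 + p^n ℤ_p`. -/
theorem stmt2 (p : ℕ) [Fact p.Prime] (hp : Odd p) (u : ℚ_[p])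
    (hu : ∃ a : ℤ_[p], u = 1 + (p : ℚ_[p]) * a) (hu1 : u ≠ 1)
    (i j : ℤ) (hij : i ≠ j) (n k : ℕ) (hn : 1 ≤ n) (hk : n + 1 ≤ k) :
    ∃ c : ℤ_[p],
      ((u ^ (j - i)) ^ (p ^ k) - 1) / ((p : ℚ_[p]) * ((u ^ (j - i)) ^ (p ^ (k - 1)) - 1))
        = 1 + (p : ℚ_[p]) ^ n * (c : ℚ_[p]) :=
  stmt2_general p hp u hu hu1 i j hij n k hk
end

section
/- Let p be a prime, A = ℤ_p[[π]], and let ψ : A → A be the ℤ_p-linear operator determined by ψ((1+π)^i) = (1+π)^{i/p} if p ∣ i and ψ((1+π)^i) = 0 otherwise; let φ : A → A be the ring map sending π to (1+π)^p − 1, and q = φ(π)/π. Then for n ≥ 2, (φ^{n−1}(q)·A) ∩ A^{ψ=0} = φ^{n−1}(q)·(A^{ψ=0}); and for n = 1, (q·A) ∩ A^{ψ=0} = φ(π)·(A^{ψ=0}). -/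
open PowerSeries

/-!
The operator `ψ` satisfies `ψ(φ(a)·g) = a·ψ(g)`. For `n ≥ 2`, `φ^{n-1}(q) = φ(φ^{n-2}(q))` and
`φ^{n-2}(q)` has constant term `p ≠ 0`, so `ψ(φ^{n-1}(q)·g) = φ^{n-2}(q)·ψ(g)` vanishes exactly
when `ψ(g)` does. For `n = 1`, write `g = π·h + c`; since `π·q = φ(π)` and `ψ(q) = 1`,
`ψ(q·g) = π·ψ(h) + c`, which vanishes exactly when `c = 0` and `ψ(h) = 0`, and then
`q·g = φ(π)·h`.
-/

theorem exists_eq_mul_and_eq_zero_iff_of_proj {A : Type*} [MulZeroClass A] [NoZeroDivisors A]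
    {φ ψ : A → A} (hproj : ∀ f g, ψ (φ f * g) = f * ψ g) {a : A} (ha : a ≠ 0) (f : A) :
    ((∃ g, f = φ a * g) ∧ ψ f = 0) ↔ ∃ g, ψ g = 0 ∧ f = φ a * g := by
  constructor
  · rintro ⟨⟨g, rfl⟩, hψf⟩
    rw [hproj] at hψf
    exact ⟨g, (mul_eq_zero.mp hψf).resolve_left ha, rfl⟩
  · rintro ⟨g, hg, rfl⟩
    exact ⟨⟨g, rfl⟩, by rw [hproj, hg, mul_zero]⟩

namespace PowerSeries

variable {R : Type*} [CommRing R]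

theorem X_mul_geom_sum_one_add (n : ℕ) :
    X * ∑ i ∈ Finset.range n, (1 + X : R⟦X⟧) ^ i = (1 + X) ^ n - 1 := by
  have h := geom_sum_mul (1 + X : R⟦X⟧) n
  rwa [add_sub_cancel_left, mul_comm] at h

theorem constantCoeff_geom_sum_one_add (n : ℕ) :
    constantCoeff (∑ i ∈ Finset.range n, (1 + X : R⟦X⟧) ^ i) = n := by
  simp

theorem constantCoeff_algHom_apply {φ : R⟦X⟧ →ₐ[R] R⟦X⟧} (hφ : constantCoeff (φ X) = 0)
    (f : R⟦X⟧) : constantCoeff (φ f) = constantCoeff f := by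
  have hC (c : R) : φ (C c) = C c := φ.commutes c
  conv_lhs => rw [eq_X_mul_shift_add_const f]
  rw [map_add, map_mul, hC, map_add, map_mul, hφ, zero_mul, zero_add, constantCoeff_C]

theorem constantCoeff_iterate_algHom {φ : R⟦X⟧ →ₐ[R] R⟦X⟧} (hφ : constantCoeff (φ X) = 0)
    (k : ℕ) (f : R⟦X⟧) : constantCoeff ((⇑φ)^[k] f) = constantCoeff f := by
  induction k with
  | zero => rfl
  | succ k ih => rw [Function.iterate_succ_apply', constantCoeff_algHom_apply hφ, ih]

theorem apply_geom_sum_one_add_eq_one {ψ : R⟦X⟧ →ₗ[R] R⟦X⟧} {p : ℕ} (hp : 0 < p)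
    (hψpow : ∀ i : ℕ, ψ ((1 + X) ^ i) = if p ∣ i then (1 + X) ^ (i / p) else 0) :
    ψ (∑ i ∈ Finset.range p, (1 + X) ^ i) = 1 := by
  rw [map_sum, Finset.sum_eq_single_of_mem 0 (Finset.mem_range.mpr hp)]
  · simpa using hψpow 0
  · intro i hi hi0
    rw [hψpow, if_neg (Nat.not_dvd_of_pos_of_lt (Nat.pos_of_ne_zero hi0) (Finset.mem_range.mp hi))]

theorem exists_eq_mul_and_eq_zero_iff_of_X_mul {φ : R⟦X⟧ →ₐ[R] R⟦X⟧} {ψ : R⟦X⟧ →ₗ[R] R⟦X⟧}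
    (hproj : ∀ f g, ψ (φ f * g) = f * ψ g) {q : R⟦X⟧} (hXq : X * q = φ X) (hψq : ψ q = 1)
    (f : R⟦X⟧) :
    ((∃ g, f = q * g) ∧ ψ f = 0) ↔ ∃ g, ψ g = 0 ∧ f = φ X * g := by
  constructor
  · rintro ⟨⟨g, rfl⟩, hψf⟩
    obtain ⟨h, c, rfl⟩ : ∃ h c, g = X * h + C c := ⟨_, _, eq_X_mul_shift_add_const g⟩
    have hqg : q * (X * h + C c) = φ X * h + c • q := by rw [smul_eq_C_mul, ← hXq]; ring
    have hψqg : X * ψ h + C c = 0 := by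
      rw [← hψf, hqg, map_add, hproj, map_smul, hψq, smul_eq_C_mul, mul_one]
    obtain rfl : c = 0 := by simpa using congrArg constantCoeff hψqg
    rw [map_zero, add_zero] at hqg hψqg ⊢
    exact ⟨h, X_mul_cancel (by rw [hψqg, mul_zero]), by rw [hqg, zero_smul, add_zero]⟩
  · rintro ⟨g, hg, rfl⟩
    exact ⟨⟨X * g, by rw [← hXq, mul_comm X q, mul_assoc]⟩, by rw [hproj, hg, mul_zero]⟩

end PowerSeries

/-- Let `A = ℤ_p[[π]]`, let `φ : A → A` be the (`ℤ_p`-algebra) ring map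
sending `π ↦ (1+π)^p − 1`, and let `ψ : A → A` be the `ℤ_p`-linear operator determined by
`ψ((1+π)^i) = (1+π)^{i/p}` if `p ∣ i` and `ψ((1+π)^i) = 0` otherwise (its characterizing
projection property `ψ(φ(f)·g) = f·ψ(g)` is included).  Writing
`q = φ(π)/π = Σ_{i<p} (1+π)^i`, we have, for `n ≥ 2`,
`(φ^{n−1}(q)·A) ∩ A^{ψ=0} = φ^{n−1}(q)·(A^{ψ=0})`, and for `n = 1`,
`(q·A) ∩ A^{ψ=0} = φ(π)·(A^{ψ=0})`. -/
theorem stmt6 (p : ℕ) [Fact p.Prime]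
    (φ : PowerSeries ℤ_[p] →ₐ[ℤ_[p]] PowerSeries ℤ_[p])
    (hφ : φ X = (1 + X) ^ p - 1)
    (ψ : PowerSeries ℤ_[p] →ₗ[ℤ_[p]] PowerSeries ℤ_[p])
    (hψpow : ∀ i : ℕ, ψ ((1 + X) ^ i) = if p ∣ i then (1 + X) ^ (i / p) else 0)
    (hproj : ∀ f g : PowerSeries ℤ_[p], ψ (φ f * g) = f * ψ g) :
    (∀ n : ℕ, 2 ≤ n → ∀ f : PowerSeries ℤ_[p],
      ((∃ g, f = (⇑φ)^[n - 1] (∑ i ∈ Finset.range p, (1 + X) ^ i) * g) ∧ ψ f = 0) ↔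
        (∃ g, ψ g = 0 ∧ f = (⇑φ)^[n - 1] (∑ i ∈ Finset.range p, (1 + X) ^ i) * g)) ∧
    (∀ f : PowerSeries ℤ_[p],
      ((∃ g, f = (∑ i ∈ Finset.range p, (1 + X) ^ i) * g) ∧ ψ f = 0) ↔
        (∃ g, ψ g = 0 ∧ f = φ X * g)) := by
  have hp : p.Prime := Fact.out
  set q : PowerSeries ℤ_[p] := ∑ i ∈ Finset.range p, (1 + X) ^ i
  have hXq : X * q = φ X := by rw [hφ, X_mul_geom_sum_one_add]
  have hq : ∀ k, (⇑φ)^[k] q ≠ 0 := fun k hk ↦ by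
    have hφ0 : constantCoeff (φ X) = 0 := by simp [← hXq]
    have h := constantCoeff_iterate_algHom hφ0 k q
    rw [hk, map_zero, constantCoeff_geom_sum_one_add] at h
    exact hp.ne_zero (by exact_mod_cast h.symm)
  refine ⟨fun n hn f ↦ ?_,
    exists_eq_mul_and_eq_zero_iff_of_X_mul hproj hXq (apply_geom_sum_one_add_eq_one hp.pos hψpow)⟩
  obtain ⟨k, rfl⟩ : ∃ k, n = k + 2 := ⟨n - 2, by omega⟩
  rw [show k + 2 - 1 = k + 1 from rfl, Function.iterate_succ_apply']
  exact exists_eq_mul_and_eq_zero_iff_of_proj hproj (hq k) f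
end

section
/- Let V be a 2-dimensional ℚ_p-vector space (more generally a free E-module of rank 2 for E/ℚ_p finite) with a linear operator φ satisfying φ² − (a_p/p^{k/2})φ + 1/p = 0, where k is even, v_p(a_p) ≥ k/2, and p > k. Given a lattice D with basis v, p^{k/2}φ(v) such that the matrix of φ in this basis is [[0, −p^{k/2−1}],[p^{−k/2}, a_p/p^{k/2}]], then for all n ≥ 0, (pφ)^n D ⊆ p^{−k/2+1} D. -/
/-! If `‖N i j‖ ≤ w j / w i` for positive weights `w`, the same bound holds for every power of
`N`: in an ultrametric ring the bound on a sum of products telescopes through the weights. For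
`N = p • M` the weights `(p ^ (k/2 - 1), 1)` work, because the two off-diagonal entries have norms at most
`p⁻¹ ^ (k/2)` and `p ^ (k/2 - 1)`, while the diagonal ones have norm at most `p⁻¹`. -/

theorem Matrix.norm_pow_apply_le_div_of_norm_apply_le_div {ι R : Type*} [Fintype ι]
    [DecidableEq ι] [NormedRing R] [NormOneClass R] [IsUltrametricDist R]
    {w : ι → ℝ} (hw : ∀ i, 0 < w i) {N : Matrix ι ι R} (hN : ∀ i j, ‖N i j‖ ≤ w j / w i)
    (n : ℕ) (i j : ι) : ‖(N ^ n) i j‖ ≤ w j / w i := by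
  have hdiv_nonneg : ∀ j, 0 ≤ w j / w i := fun j ↦ (div_pos (hw j) (hw i)).le
  induction n generalizing j with
  | zero =>
    rcases eq_or_ne i j with rfl | hij
    · simp [div_self (hw i).ne']
    · simpa [Matrix.one_apply_ne hij] using hdiv_nonneg j
  | succ n ih =>
    rw [pow_succ, Matrix.mul_apply]
    refine IsUltrametricDist.norm_sum_le_of_forall_le_of_nonneg (hdiv_nonneg j) fun k _ ↦ ?_
    calc ‖(N ^ n) i k * N k j‖ ≤ ‖(N ^ n) i k‖ * ‖N k j‖ := norm_mul_le _ _
      _ ≤ w k / w i * (w j / w k) := mul_le_mul (ih k) (hN k j) (norm_nonneg _) (hdiv_nonneg k)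
      _ = w j / w i := by field_simp [(hw k).ne']

theorem inv_mul_pow_le_pow_pred {x : ℝ} (hx : 1 ≤ x) (m : ℕ) : x⁻¹ * x ^ m ≤ x ^ (m - 1) := by
  rcases m with _ | m
  · simpa using inv_le_one_of_one_le₀ hx
  · rw [pow_succ', ← mul_assoc, inv_mul_cancel₀ (by positivity), one_mul, Nat.add_sub_cancel]

theorem stmt11_general (p : ℕ) [Fact p.Prime]
    (k : ℕ)
    (E : Type*) [NontriviallyNormedField E] [IsUltrametricDist E]
    (hpE : ‖(p : E)‖ = (p : ℝ)⁻¹)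
    (a : E) (ha : ‖a‖ ≤ (p : ℝ)⁻¹ ^ (k / 2)) :
    ∀ (n : ℕ) (i j : Fin 2),
      ‖(((p : E) • (!![0, -(p : E) ^ (k / 2 - 1);
            ((p : E) ^ (k / 2))⁻¹, a / (p : E) ^ (k / 2)])) ^ n) i j‖
        ≤ (p : ℝ) ^ (k / 2 - 1) := by
  set m := k / 2
  have hp : (1 : ℝ) ≤ p := by exact_mod_cast (Fact.out : p.Prime).one_lt.le
  have hp_inv : (p : ℝ)⁻¹ ≤ 1 := inv_le_one_of_one_le₀ hp
  have hpm : (1 : ℝ) ≤ p ^ (m - 1) := one_le_pow₀ hp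
  have ha' : ‖a‖ * p ^ m ≤ 1 := calc
    ‖a‖ * p ^ m ≤ (p : ℝ)⁻¹ ^ m * p ^ m := by gcongr
    _ = 1 := by rw [← mul_pow, inv_mul_cancel₀ (by positivity), one_pow]
  have hw : ∀ i, 0 < ![(p : ℝ) ^ (m - 1), 1] i := Fin.forall_fin_two.2 ⟨by positivity, one_pos⟩
  have hN : ∀ i j, ‖((p : E) • !![0, -(p : E) ^ (m - 1); ((p : E) ^ m)⁻¹, a / (p : E) ^ m]) i j‖
      ≤ ![(p : ℝ) ^ (m - 1), 1] j / ![(p : ℝ) ^ (m - 1), 1] i := by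
    intro i j
    fin_cases i <;> fin_cases j
    · simp
    · simpa [hpE] using mul_le_of_le_one_left (by positivity : (0 : ℝ) ≤ ((p : ℝ) ^ (m - 1))⁻¹) hp_inv
    · simpa [hpE] using inv_mul_pow_le_pow_pred hp m
    · simpa [hpE, mul_assoc] using mul_le_one₀ hp_inv (by positivity) ha'
  intro n i j
  refine (Matrix.norm_pow_apply_le_div_of_norm_apply_le_div hw hN n i j).trans ?_
  fin_cases i <;> fin_cases j <;> simp [hpm, (inv_le_one_of_one_le₀ hpm).trans hpm]

/-- Let `V` be a 2-dimensional vector space over a field `E` complete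
with a normalized nonarchimedean absolute value extending the `p`-adic one
(`‖p‖ = p⁻¹`), with a linear operator `φ` satisfying
`φ² − (a_p/p^{k/2})φ + 1/p = 0`, where `k` is even, `v_p(a_p) ≥ k/2` and `p > k`.
Given the lattice `D` with basis `v, p^{k/2}φ(v)` so that the matrix of `φ` in this
basis is `[[0, −p^{k/2−1}], [p^{−k/2}, a_p/p^{k/2}]]`, then for all `n ≥ 0` we have
`(pφ)^n D ⊆ p^{−k/2+1} D`; in matrix terms, every entry of `(p·M)^n` has `p`-adic
valuation at least `−k/2 + 1`, i.e. norm at most `p^{k/2 − 1}`. -/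
theorem stmt11 (p : ℕ) [Fact p.Prime] (hp : Odd p) (k : ℕ) (hk : Even k) (hk0 : 0 < k)
    (hpk : k < p)
    (E : Type*) [NontriviallyNormedField E] [IsUltrametricDist E]
    (hpE : ‖(p : E)‖ = (p : ℝ)⁻¹)
    (a : E) (ha : ‖a‖ ≤ (p : ℝ)⁻¹ ^ (k / 2)) :
    ∀ (n : ℕ) (i j : Fin 2),
      ‖(((p : E) • (!![0, -(p : E) ^ (k / 2 - 1);
            ((p : E) ^ (k / 2))⁻¹, a / (p : E) ^ (k / 2)])) ^ n) i j‖
        ≤ (p : ℝ) ^ (k / 2 - 1) :=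
  stmt11_general p k E hpE a ha
end

section
/- Let φ satisfy φ² − (a_p/p^{k/2})φ + 1/p = 0 on a rank-2 lattice D over 𝒪_E (E/ℚ_p finite), with v_p(a_p) ≥ k/2, k even, p > k, and φ(D) ⊆ p^{−k/2}D. Then 1 − φ is invertible on D ⊗ ℚ_p and (1 − φ)^{−1}(D) ⊆ p^{−k/2+1} D. Explicitly, (1−φ)^{−1} = (φ + 1 − a_p/p^{k/2})/(1 − a_p/p^{k/2} + 1/p), and the denominator 1 − a_p/p^{k/2} + 1/p has p-adic valuation −1. -/
/-!
Writing `c = a / p^{k/2}` and `q = 1/p`, the relation `φ² = cφ − q` makes `(1 − φ)(φ + 1 − c)` equal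
to the scalar `d = 1 − c + q`; since `‖c‖ ≤ 1 < ‖q‖`, the ultrametric inequality gives `‖d‖ = p`, so
`d ≠ 0` and `1 − φ` is invertible with inverse `d⁻¹(φ + 1 − c)`. For `x ∈ D`, the solution `y` of
`(1 − φ)y = x` is `d⁻¹ p^{-k/2} (p^{k/2} φ x) + d⁻¹ (1 − c) x`, whose first coefficient has norm
`p^{k/2 − 1}`; multiplying by `p^{k/2 − 1}` makes both coefficients integral.
-/

section QuadraticEndomorphism

variable {R V : Type*} [CommRing R] [AddCommGroup V] [Module R V] {φ : V →ₗ[R] V} {c q : R}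

lemma LinearMap.apply_apply_eq_of_quadratic (h : φ ∘ₗ φ - c • φ + q • LinearMap.id = 0) (x : V) :
    φ (φ x) = c • φ x - q • x := by
  have hx := LinearMap.congr_fun h x
  simp only [LinearMap.add_apply, LinearMap.sub_apply, LinearMap.comp_apply,
    LinearMap.smul_apply, LinearMap.id_apply, LinearMap.zero_apply] at hx
  linear_combination (norm := module) hx

lemma LinearMap.id_sub_comp_eq_of_quadratic (h : φ ∘ₗ φ - c • φ + q • LinearMap.id = 0) :
    (LinearMap.id - φ) ∘ₗ (φ + (1 - c) • LinearMap.id) = (1 - c + q) • LinearMap.id := by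
  ext x
  simp only [LinearMap.comp_apply, LinearMap.sub_apply, LinearMap.add_apply,
    LinearMap.smul_apply, LinearMap.id_apply, map_add, map_smul]
  rw [apply_apply_eq_of_quadratic h]
  module

lemma LinearMap.comp_id_sub_eq_of_quadratic (h : φ ∘ₗ φ - c • φ + q • LinearMap.id = 0) :
    (φ + (1 - c) • LinearMap.id) ∘ₗ (LinearMap.id - φ) = (1 - c + q) • LinearMap.id := by
  ext x
  simp only [LinearMap.comp_apply, LinearMap.sub_apply, LinearMap.add_apply,
    LinearMap.smul_apply, LinearMap.id_apply, map_sub]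
  rw [apply_apply_eq_of_quadratic h]
  module

end QuadraticEndomorphism

lemma LinearMap.bijective_id_sub_of_quadratic {K V : Type*} [Field K] [AddCommGroup V]
    [Module K V] {φ : V →ₗ[K] V} {c q : K} (h : φ ∘ₗ φ - c • φ + q • LinearMap.id = 0)
    (hd : 1 - c + q ≠ 0) : Function.Bijective ⇑((LinearMap.id : V →ₗ[K] V) - φ) := by
  set g := (1 - c + q)⁻¹ • (φ + (1 - c) • LinearMap.id)
  refine Function.bijective_iff_has_inverse.mpr ⟨g, fun y => ?_, fun y => ?_⟩
  · have hy := LinearMap.congr_fun (comp_id_sub_eq_of_quadratic h) y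
    simp only [LinearMap.comp_apply, LinearMap.smul_apply, LinearMap.id_apply] at hy
    simp only [g, LinearMap.smul_apply, hy, smul_smul, inv_mul_cancel₀ hd, one_smul]
  · have hy := LinearMap.congr_fun (id_sub_comp_eq_of_quadratic h) y
    simp only [LinearMap.comp_apply, LinearMap.smul_apply, LinearMap.id_apply] at hy
    simp only [g, LinearMap.smul_apply, map_smul, hy, smul_smul, inv_mul_cancel₀ hd, one_smul]

section Ultrametric

variable {E : Type*} [NormedField E] [IsUltrametricDist E] {c : E}

lemma IsUltrametricDist.norm_one_sub_le_one (hc : ‖c‖ ≤ 1) : ‖1 - c‖ ≤ 1 := by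
  simpa [sub_eq_add_neg, hc] using norm_add_le_max (1 : E) (-c)

lemma IsUltrametricDist.norm_one_sub_add_eq {u : E} (hc : ‖c‖ ≤ 1) (hu : 1 < ‖u‖) :
    ‖1 - c + u‖ = ‖u‖ := by
  have h1c := norm_one_sub_le_one hc
  rw [norm_add_eq_max_of_norm_ne_norm (h1c.trans_lt hu).ne, max_eq_right (h1c.trans hu.le)]

end Ultrametric

lemma AddSubgroup.smul_mem_of_smul_eq_add {E V : Type*} [NormedField E] [AddCommGroup V]
    [Module E V] (D : AddSubgroup V) (hD : ∀ c : E, ‖c‖ ≤ 1 → ∀ x ∈ D, c • x ∈ D)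
    {π d e s : E} {x y z : V} (hx : x ∈ D) (hz : π • z ∈ D) (hy : d • y = z + e • x)
    (hπ : π ≠ 0) (hd : d ≠ 0) (hπ1 : ‖π‖ ≤ 1) (he : ‖e‖ ≤ 1) (hs : ‖s‖ ≤ ‖d‖ * ‖π‖) :
    s • y ∈ D := by
  have hsd : ‖s‖ / ‖d‖ ≤ ‖π‖ := div_le_of_le_mul₀ (norm_nonneg _) (norm_nonneg _) (by linarith)
  have hsplit : s • y = (s / (d * π)) • (π • z) + (s * e / d) • x := by
    have : y = d⁻¹ • (z + e • x) := by rw [← hy, smul_smul, inv_mul_cancel₀ hd, one_smul]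
    rw [this]
    match_scalars <;> field_simp
  rw [hsplit]
  refine D.add_mem (hD _ ?_ _ hz) (hD _ ?_ _ hx)
  · rw [norm_div, norm_mul]
    exact div_le_one_of_le₀ hs (by positivity)
  · rw [norm_div, norm_mul, mul_div_right_comm]
    exact mul_le_one₀ (hsd.trans hπ1) (norm_nonneg _) he

theorem stmt12_general (p : ℕ) [Fact p.Prime] (k : ℕ) (hk : Even k) (hk0 : 0 < k)
    (E : Type*) [NontriviallyNormedField E] [IsUltrametricDist E]
    (hpE : ‖(p : E)‖ = (p : ℝ)⁻¹)
    (a : E) (ha : ‖a‖ ≤ (p : ℝ)⁻¹ ^ (k / 2))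
    (V : Type*) [AddCommGroup V] [Module E V]
    (φ : V →ₗ[E] V)
    (hquad : φ ∘ₗ φ - (a / (p : E) ^ (k / 2)) • φ + ((p : E))⁻¹ • LinearMap.id = 0)
    (D : AddSubgroup V)
    (hDsmul : ∀ c : E, ‖c‖ ≤ 1 → ∀ x ∈ D, c • x ∈ D)
    (hstab : ∀ x ∈ D, (p : E) ^ (k / 2) • φ x ∈ D) :
    Function.Bijective ⇑((LinearMap.id : V →ₗ[E] V) - φ) ∧
    (∀ x ∈ D, ∀ y : V, ((LinearMap.id : V →ₗ[E] V) - φ) y = x → (p : E) ^ (k / 2 - 1) • y ∈ D) ∧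
    (((LinearMap.id : V →ₗ[E] V) - φ) ∘ₗ (φ + (1 - a / (p : E) ^ (k / 2)) • LinearMap.id)
        = (1 - a / (p : E) ^ (k / 2) + (p : E)⁻¹) • LinearMap.id) ∧
    ‖1 - a / (p : E) ^ (k / 2) + (p : E)⁻¹‖ = (p : ℝ) := by
  set m := k / 2
  have hm : m ≠ 0 := by obtain ⟨t, rfl⟩ := hk; omega
  have hp1 : (1 : ℝ) < p := by exact_mod_cast (Fact.out : p.Prime).one_lt
  have hpm : ‖(p : E) ^ m‖ = (p : ℝ)⁻¹ ^ m := by rw [norm_pow, hpE]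
  have hpm0 : (p : E) ^ m ≠ 0 := norm_ne_zero_iff.mp (by rw [hpm]; positivity)
  have hc : ‖a / (p : E) ^ m‖ ≤ 1 := by
    rw [norm_div, hpm]; exact div_le_one_of_le₀ ha (by positivity)
  have hpinv : ‖(p : E)⁻¹‖ = p := by rw [norm_inv, hpE, inv_inv]
  have hd : ‖1 - a / (p : E) ^ m + (p : E)⁻¹‖ = p := by
    rw [IsUltrametricDist.norm_one_sub_add_eq hc (by rwa [hpinv]), hpinv]
  have hd0 : 1 - a / (p : E) ^ m + (p : E)⁻¹ ≠ 0 := norm_ne_zero_iff.mp (by rw [hd]; positivity)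
  refine ⟨LinearMap.bijective_id_sub_of_quadratic hquad hd0, fun x hx y hy => ?_,
    LinearMap.id_sub_comp_eq_of_quadratic hquad, hd⟩
  have hdy := LinearMap.congr_fun (LinearMap.comp_id_sub_eq_of_quadratic hquad) y
  simp only [LinearMap.comp_apply, hy, LinearMap.add_apply, LinearMap.smul_apply,
    LinearMap.id_apply] at hdy
  refine D.smul_mem_of_smul_eq_add hDsmul hx (hstab x hx) hdy.symm hpm0 hd0
    (by rw [hpm]; exact pow_le_one₀ (by positivity) (inv_le_one_of_one_le₀ hp1.le)) ?_ ?_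
  · exact IsUltrametricDist.norm_one_sub_le_one hc
  · rw [hd, ← pow_sub_one_mul hm, norm_mul, hpE, mul_left_comm, mul_inv_cancel₀ (by positivity),
      mul_one]

/-- Let `φ` satisfy `φ² − (a_p/p^{k/2})φ + 1/p = 0` on a rank-2 lattice
`D` over the ring of integers of a nonarchimedean field `E` (with `‖p‖ = p⁻¹`), with
`v_p(a_p) ≥ k/2`, `k` even, `p > k` and `φ(D) ⊆ p^{−k/2} D`.  Then `1 − φ` is invertible
on the ambient vector space, `(1 − φ)⁻¹(D) ⊆ p^{−k/2+1} D`, explicitly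
`(1−φ)⁻¹ = (φ + 1 − a_p/p^{k/2})/(1 − a_p/p^{k/2} + 1/p)`, and the denominator
`1 − a_p/p^{k/2} + 1/p` has `p`-adic valuation `−1` (norm `p`). -/
theorem stmt12 (p : ℕ) [Fact p.Prime] (hp : Odd p) (k : ℕ) (hk : Even k) (hk0 : 0 < k)
    (hpk : k < p)
    (E : Type*) [NontriviallyNormedField E] [IsUltrametricDist E]
    (hpE : ‖(p : E)‖ = (p : ℝ)⁻¹)
    (a : E) (ha : ‖a‖ ≤ (p : ℝ)⁻¹ ^ (k / 2))
    (V : Type*) [AddCommGroup V] [Module E V]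
    (φ : V →ₗ[E] V)
    (hquad : φ ∘ₗ φ - (a / (p : E) ^ (k / 2)) • φ + ((p : E))⁻¹ • LinearMap.id = 0)
    (D : AddSubgroup V)
    (hDsmul : ∀ c : E, ‖c‖ ≤ 1 → ∀ x ∈ D, c • x ∈ D)
    (hfree : ∃ v w : V, ∀ x : V, x ∈ D ↔
        ∃ b c : E, ‖b‖ ≤ 1 ∧ ‖c‖ ≤ 1 ∧ x = b • v + c • w)
    (hstab : ∀ x ∈ D, (p : E) ^ (k / 2) • φ x ∈ D) :
    Function.Bijective ⇑((LinearMap.id : V →ₗ[E] V) - φ) ∧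
    (∀ x ∈ D, ∀ y : V, ((LinearMap.id : V →ₗ[E] V) - φ) y = x → (p : E) ^ (k / 2 - 1) • y ∈ D) ∧
    (((LinearMap.id : V →ₗ[E] V) - φ) ∘ₗ (φ + (1 - a / (p : E) ^ (k / 2)) • LinearMap.id)
        = (1 - a / (p : E) ^ (k / 2) + (p : E)⁻¹) • LinearMap.id) ∧
    ‖1 - a / (p : E) ^ (k / 2) + (p : E)⁻¹‖ = (p : ℝ) :=
  stmt12_general p k hk hk0 E hpE a ha V φ hquad D hDsmul hstab
end
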